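/- arXiv:2204.08565 — 4 statements merged into one kernel-verified Lean document; each statement's English description precedes it below -/
import Mathlib

section
/- Let I be a monomial ideal of Borel type in K[x_1,...,x_n]. Then every associated prime of S/I has the form (x_1,...,x_i) for some i with 0 ≤ i ≤ n. -/
open MvPolynomial

section Preamble

variable {K : Type} [Field K] {n : ℕ}

/-- The Hilbert function of `S/I`: the `K`-dimension of the degree-`d` component of `S/I`,
realized as `S_d / (I ∩ S_d)`. -/
noncomputable def hilbFn (I : Ideal (MvPolynomial (Fin n) K)) (d : ℕ) : ℕ :=
  Module.finrank K
    (↥(homogeneousSubmodule (Fin n) K d) ⧸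
      ((Submodule.restrictScalars K I ⊓ homogeneousSubmodule (Fin n) K d).comap
        (homogeneousSubmodule (Fin n) K d).subtype))

open Filter in
/-- The Hilbert polynomial of `S/I`: the polynomial eventually agreeing with the Hilbert
function (or `0` if none exists). -/
noncomputable def hilbPoly (I : Ideal (MvPolynomial (Fin n) K)) : Polynomial ℚ :=
  letI := Classical.propDecidable
  if h : ∃ p : Polynomial ℚ, ∀ᶠ d : ℕ in atTop, p.eval (d : ℚ) = hilbFn I d then h.choose
  else 0

/-- The multiplicity `e(S/I)`: the normalized leading coefficient of the Hilbert polynomial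
of `S/I`; in the zero-dimensional case (zero Hilbert polynomial) it is the total length,
i.e. the sum of the values of the Hilbert function. -/
noncomputable def multQ (I : Ideal (MvPolynomial (Fin n) K)) : ℚ :=
  if hilbPoly I = 0 then ∑' d : ℕ, (hilbFn I d : ℚ)
  else (Nat.factorial (hilbPoly I).natDegree) * (hilbPoly I).leadingCoeff

/-- The length-multiplicity `mult_I(P)`: the length (sup of lengths of chains of submodules)
of the largest finite-length submodule of `(S/I)_P`. -/
noncomputable def lmult (I P : Ideal (MvPolynomial (Fin n) K)) : ℕ :=
  letI := Classical.propDecidable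
  if hp : P.IsPrime then
    letI := hp
    sSup {k : ℕ | ∃ c : Fin (k + 1) →
      Submodule (Localization P.primeCompl)
        ↥(sSup {N : Submodule (Localization P.primeCompl)
            (LocalizedModule P.primeCompl (MvPolynomial (Fin n) K ⧸ I)) |
          IsFiniteLength (Localization P.primeCompl) ↥N}),
      StrictMono c}
  else 0

/-- The `r`-th arithmetic degree of `I`. -/
noncomputable def arithDegR (I : Ideal (MvPolynomial (Fin n) K)) (r : ℕ) : ℚ :=
  ∑ᶠ P ∈ {P ∈ associatedPrimes (MvPolynomial (Fin n) K) (MvPolynomial (Fin n) K ⧸ I) |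
      ringKrullDim (MvPolynomial (Fin n) K ⧸ P) = (r : WithBot ℕ∞)},
    (lmult I P : ℚ) * multQ P

/-- The arithmetic degree of `I`. -/
noncomputable def arithDeg (I : Ideal (MvPolynomial (Fin n) K)) : ℚ :=
  ∑ᶠ P ∈ associatedPrimes (MvPolynomial (Fin n) K) (MvPolynomial (Fin n) K ⧸ I),
    (lmult I P : ℚ) * multQ P

/-- The `r`-th geometric degree of `I`. -/
noncomputable def geomDegR (I : Ideal (MvPolynomial (Fin n) K)) (r : ℕ) : ℚ :=
  ∑ᶠ P ∈ {P ∈ I.minimalPrimes |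
      ringKrullDim (MvPolynomial (Fin n) K ⧸ P) = (r : WithBot ℕ∞)},
    (lmult I P : ℚ) * multQ P

/-- The geometric degree of `I`. -/
noncomputable def geomDeg (I : Ideal (MvPolynomial (Fin n) K)) : ℚ :=
  ∑ᶠ P ∈ I.minimalPrimes, (lmult I P : ℚ) * multQ P

/-- `I` is generated by forms of degree at most `d`. -/
def GeneratedInDegLE (I : Ideal (MvPolynomial (Fin n) K)) (d : ℕ) : Prop :=
  ∃ G : Set (MvPolynomial (Fin n) K), I = Ideal.span G ∧
    ∀ g ∈ G, ∃ k ≤ d, g.IsHomogeneous k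

/-- `I` is a homogeneous ideal (generated by homogeneous elements). -/
def IsHomogeneousIdeal (I : Ideal (MvPolynomial (Fin n) K)) : Prop :=
  ∃ G : Set (MvPolynomial (Fin n) K), I = Ideal.span G ∧ ∀ g ∈ G, ∃ k, g.IsHomogeneous k

/-- The Castelnuovo–Mumford regularity of a homogeneous ideal `I ⊆ S`, defined as the least
`m` such that `I` admits a finite graded free resolution whose `i`-th free module is generated
in degrees at most `m + i`.  The resolution is encoded by ranks `rk i`, generator degrees
`dg i`, an augmentation `g : F_0 → I` and matrices `d i : F_{i+1} → F_i` of homogeneous forms,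
exact everywhere. -/
noncomputable def idealReg (I : Ideal (MvPolynomial (Fin n) K)) : ℕ :=
  sInf { m : ℕ |
    ∃ (rk : ℕ → ℕ) (dg : (i : ℕ) → Fin (rk i) → ℕ)
      (g : Fin (rk 0) → MvPolynomial (Fin n) K)
      (d : (i : ℕ) → Matrix (Fin (rk i)) (Fin (rk (i + 1))) (MvPolynomial (Fin n) K)),
      (∀ s, (g s).IsHomogeneous (dg 0 s)) ∧
      Ideal.span (Set.range g) = I ∧
      (∀ i s t, d i s t = 0 ∨ ∃ k, k + dg i s = dg (i + 1) t ∧ (d i s t).IsHomogeneous k) ∧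
      (∀ i, LinearMap.range (d (i + 1)).mulVecLin = LinearMap.ker (d i).mulVecLin) ∧
      LinearMap.range (d 0).mulVecLin =
        LinearMap.ker (Matrix.of fun (_ : Fin 1) s => g s).mulVecLin ∧
      (∃ N, ∀ i, N ≤ i → rk i = 0) ∧
      (∀ i s, dg i s ≤ m + i) }

/-- `I` is a monomial ideal. -/
def IsMonomialIdeal (I : Ideal (MvPolynomial (Fin n) K)) : Prop :=
  ∃ A : Set (Fin n →₀ ℕ), I = Ideal.span ((fun a => (monomial a (1 : K))) '' A)

/-- `I` is of Borel type: for every monomial `x^a ∈ I`, every `i`, and every `j ≤ i`,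
some `x_j^t · x^a / x_i^{a_i}` lies in `I`. -/
def IsBorelType (I : Ideal (MvPolynomial (Fin n) K)) : Prop :=
  IsMonomialIdeal I ∧
    ∀ a : Fin n →₀ ℕ, monomial a (1 : K) ∈ I → ∀ i j : Fin n, j ≤ i →
      ∃ t : ℕ, monomial (Finsupp.single j t + a.erase i) (1 : K) ∈ I

/-- `I` is strongly stable: for every monomial `x^a ∈ I` with `x_i ∣ x^a` and `j ≤ i`,
also `x_j · x^a / x_i ∈ I`. -/
def IsStronglyStable (I : Ideal (MvPolynomial (Fin n) K)) : Prop :=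
  IsMonomialIdeal I ∧
    ∀ a : Fin n →₀ ℕ, monomial a (1 : K) ∈ I → ∀ i j : Fin n, j ≤ i → a i ≠ 0 →
      monomial (a - Finsupp.single i 1 + Finsupp.single j 1) (1 : K) ∈ I

/-- The pair `(x^a, Z)` is admissible for `I`: `Z ∩ supp(x^a) = ∅` and
`x^a·K[Z] ∩ I = {0}`. -/
def IsAdmissiblePair (I : Ideal (MvPolynomial (Fin n) K)) (a : Fin n →₀ ℕ)
    (Z : Finset (Fin n)) : Prop :=
  (∀ i ∈ a.support, i ∉ Z) ∧
    ∀ b : Fin n →₀ ℕ, (∀ i ∈ b.support, i ∈ Z) → monomial (a + b) (1 : K) ∉ I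

/-- `x^a·K[Z] ⊆ x^{a'}·K[Z']` as sets of monomials. -/
def ConeLE {n : ℕ} (a : Fin n →₀ ℕ) (Z : Finset (Fin n)) (a' : Fin n →₀ ℕ)
    (Z' : Finset (Fin n)) : Prop :=
  ∀ b : Fin n →₀ ℕ, (∀ i ∈ b.support, i ∈ Z) →
    ∃ b' : Fin n →₀ ℕ, (∀ i ∈ b'.support, i ∈ Z') ∧ a + b = a' + b'

/-- `(x^a, Z)` is a standard pair of the monomial ideal `I`. -/
def IsStandardPair (I : Ideal (MvPolynomial (Fin n) K)) (a : Fin n →₀ ℕ)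
    (Z : Finset (Fin n)) : Prop :=
  IsAdmissiblePair I a Z ∧
    ∀ a' Z', IsAdmissiblePair I a' Z' → (a, Z) ≠ (a', Z') → ¬ ConeLE a Z a' Z'

/-- `std_r(I)`: the number of standard pairs `(·, Z)` of `I` with `|Z| = r`. -/
noncomputable def stdR (I : Ideal (MvPolynomial (Fin n) K)) (r : ℕ) : ℕ :=
  Nat.card {p : (Fin n →₀ ℕ) × Finset (Fin n) // IsStandardPair I p.1 p.2 ∧ p.2.card = r}

/-- The exponents of the minimal monomial generators of a monomial ideal. -/
def minMonomialGens (I : Ideal (MvPolynomial (Fin n) K)) : Set (Fin n →₀ ℕ) :=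
  {a | monomial a (1 : K) ∈ I ∧
    ∀ i ∈ a.support, monomial (a - Finsupp.single i 1) (1 : K) ∉ I}

/-- `Md_i(I)`: the largest power of `x_i` appearing in a minimal monomial generator of `I`. -/
noncomputable def Md (I : Ideal (MvPolynomial (Fin n) K)) (i : Fin n) : ℕ :=
  sSup ((fun a => a i) '' minMonomialGens I)

/-- The generating degree of an ideal: the least `D` such that the ideal is generated in
degrees at most `D`. -/
noncomputable def genDeg {σ : Type} (J : Ideal (MvPolynomial σ K)) : ℕ :=
  sInf {D : ℕ | ∃ G : Set (MvPolynomial σ K), J = Ideal.span G ∧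
    ∀ g ∈ G, g.totalDegree ≤ D}

/-- The depth of a (local) ring: the longest regular sequence of nonunits. -/
noncomputable def ringDepth (R : Type) [CommRing R] : ℕ :=
  sSup {k : ℕ | ∃ rs : List R, rs.length = k ∧ (∀ a ∈ rs, a ∈ nonunits R) ∧
    RingTheory.Sequence.IsRegular R rs}

/-- A (local) ring is Cohen–Macaulay if its depth equals its Krull dimension. -/
def IsCMLocal (R : Type) [CommRing R] : Prop :=
  (ringDepth R : WithBot ℕ∞) = ringKrullDim R

/-- The height `ht(P/J)`: the sup of lengths of chains of primes between `J` and `P`. -/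
noncomputable def heightOver (J P : Ideal (MvPolynomial (Fin n) K)) : ℕ :=
  sSup {k : ℕ | ∃ c : Fin (k + 1) → Ideal (MvPolynomial (Fin n) K),
    (∀ i, (c i).IsPrime ∧ J ≤ c i) ∧ StrictMono c ∧ c (Fin.last k) = P}

end Preamble

section BorelAuxiliary

open AddMonoidAlgebra

set_option linter.unusedSectionVars false

noncomputable def mo {n : ℕ} : MonomialOrder (Fin n) := MonomialOrder.lex

variable {K : Type} [Field K] {n : ℕ}

lemma coeff_top_mul (p q : MvPolynomial (Fin n) K) (cp cq : Fin n →₀ ℕ)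
    (hp : ∀ b ∈ p.support, mo.toSyn b ≤ mo.toSyn cp)
    (hq : ∀ b ∈ q.support, mo.toSyn b ≤ mo.toSyn cq) :
    (p * q).coeff (cp + cq) = p.coeff cp * q.coeff cq :=
  AddMonoidAlgebra.apply_add_of_supDegree_le (fun a b => map_add _ a b)
    mo.toSyn.injective (Finset.sup_le hp) (Finset.sup_le hq)

section
variable {A : Set (Fin n →₀ ℕ)} {I : Ideal (MvPolynomial (Fin n) K)}
  (hIA : I = Ideal.span ((fun a => monomial a (1 : K)) '' A))

include hIA

lemma memI_iff (h : MvPolynomial (Fin n) K) :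
    h ∈ I ↔ ∀ b ∈ h.support, ∃ a ∈ A, a ≤ b := by
  rw [hIA]; exact mem_ideal_span_monomial_image

lemma memM_iff (b : Fin n →₀ ℕ) :
    monomial b (1 : K) ∈ I ↔ ∃ a ∈ A, a ≤ b := by
  classical
  rw [memI_iff hIA, support_monomial]
  simp

lemma memUp {b c : Fin n →₀ ℕ} (hb : monomial b (1 : K) ∈ I) (hbc : b ≤ c) :
    monomial c (1 : K) ∈ I := by
  rw [memM_iff hIA] at hb ⊢
  obtain ⟨a, ha, h⟩ := hb
  exact ⟨a, ha, h.trans hbc⟩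

lemma keyB {g : MvPolynomial (Fin n) K} {c : Fin n →₀ ℕ} (hc : g.coeff c ≠ 0)
    (hcmax : ∀ b ∈ g.support, mo.toSyn b ≤ mo.toSyn c) :
    ∀ s : ℕ, ∀ f : MvPolynomial (Fin n) K, f.support.card ≤ s → g * f ∈ I →
      monomial (s • c) (1 : K) * f ∈ I := by
  intro s
  induction s with
  | zero =>
    intro f hcard _
    have : f = 0 := by
      rwa [Nat.le_zero, Finset.card_eq_zero, MvPolynomial.support_eq_empty] at hcard
    simp [this]
  | succ s ih =>
    intro f hcard hgf
    by_cases hf : f = 0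
    · simp [hf]
    obtain ⟨d, hd, hdeq⟩ := AddMonoidAlgebra.exists_supDegree_mem_support (⇑mo.toSyn) hf
    have hdmax : ∀ b ∈ f.support, mo.toSyn b ≤ mo.toSyn d := fun b hb =>
      hdeq ▸ Finset.le_sup (f := ⇑mo.toSyn) hb
    have hfd : f.coeff d ≠ 0 := MvPolynomial.mem_support_iff.mp hd
    have htop : (g * f).coeff (c + d) = g.coeff c * f.coeff d :=
      coeff_top_mul g f c d hcmax hdmax
    have hcd : ∃ a ∈ A, a ≤ c + d := by
      refine (memI_iff hIA _).mp hgf _ ?_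
      rw [MvPolynomial.mem_support_iff, htop]
      exact mul_ne_zero hc hfd
    have hmemcd : monomial (c + d) (1 : K) ∈ I := (memM_iff hIA _).mpr hcd
    set f'' := monomial c (1 : K) * f - monomial (c + d) (f.coeff d) with hf''
    have hsub : f''.support ⊆ ((f.support.image (c + ·)).erase (c + d)) := by
      intro e he
      rw [MvPolynomial.mem_support_iff] at he
      have he2 : e ≠ c + d := by
        rintro rfl
        apply he
        rw [hf'', MvPolynomial.coeff_sub, MvPolynomial.coeff_monomial_mul,
          MvPolynomial.coeff_monomial, if_pos rfl, one_mul, sub_self]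
      refine Finset.mem_erase.mpr ⟨he2, ?_⟩
      have he3 : (monomial c (1 : K) * f).coeff e ≠ 0 := by
        intro h0
        apply he
        rw [hf'', MvPolynomial.coeff_sub, h0, MvPolynomial.coeff_monomial, if_neg (Ne.symm he2),
          sub_zero]
      rw [MvPolynomial.coeff_monomial_mul'] at he3
      by_cases hce : c ≤ e
      · rw [if_pos hce, one_mul] at he3
        exact Finset.mem_image.mpr ⟨e - c, MvPolynomial.mem_support_iff.mpr he3, by
          rw [add_tsub_cancel_of_le hce]⟩
      · rw [if_neg hce] at he3; exact absurd rfl he3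
    have hcard'' : f''.support.card ≤ s := by
      have h1 : (c + d) ∈ f.support.image (c + ·) := Finset.mem_image.mpr ⟨d, hd, rfl⟩
      calc f''.support.card ≤ ((f.support.image (c + ·)).erase (c + d)).card :=
            Finset.card_le_card hsub
        _ = (f.support.image (c + ·)).card - 1 := Finset.card_erase_of_mem h1
        _ ≤ f.support.card - 1 := by
            exact Nat.sub_le_sub_right (Finset.card_image_le) 1
        _ ≤ s := by omega
    have hgf'' : g * f'' ∈ I := by
      have : g * f'' = monomial c (1 : K) * (g * f) - g * monomial (c + d) (f.coeff d) := by
        rw [hf'']; ring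
      rw [this]
      refine Submodule.sub_mem _ (Ideal.mul_mem_left _ _ hgf) (Ideal.mul_mem_left _ _ ?_)
      have : monomial (c + d) (f.coeff d) = C (f.coeff d) * monomial (c + d) (1 : K) := by
        rw [C_mul_monomial, mul_one]
      rw [this]
      exact Ideal.mul_mem_left _ _ hmemcd
    have hih := ih f'' hcard'' hgf''
    have e1 : monomial (s • c) (1 : K) * (monomial c (1:K) * f) =
        monomial ((s+1) • c) (1:K) * f := by
      rw [← mul_assoc, monomial_mul, one_mul, succ_nsmul]
    have heq : monomial ((s + 1) • c) (1 : K) * f =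
        monomial (s • c) (1 : K) * f'' + monomial (s • c + (c + d)) (f.coeff d) := by
      rw [hf'', mul_sub, e1, monomial_mul, one_mul]
      ring
    rw [heq]
    refine Submodule.add_mem _ hih ?_
    have : monomial (s • c + (c + d)) (f.coeff d)
        = C (f.coeff d) * monomial (s • c + (c + d)) (1 : K) := by
      rw [C_mul_monomial, mul_one]
    rw [this]
    exact Ideal.mul_mem_left _ _ (memUp hIA hmemcd le_add_self)

lemma keyA {P : Ideal (MvPolynomial (Fin n) K)} (hprime : P.IsPrime)
    {f : MvPolynomial (Fin n) K} (hfI : f ∉ I)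
    (hP : ∀ g : MvPolynomial (Fin n) K, g ∈ P ↔ g * f ∈ I) :
    ∀ s : ℕ, ∀ g : MvPolynomial (Fin n) K, g.support.card ≤ s → g ∈ P →
      ∀ b ∈ g.support, monomial b (1 : K) ∈ P := by
  intro s
  induction s with
  | zero =>
    intro g hcard _ b hb
    rw [Nat.le_zero, Finset.card_eq_zero] at hcard
    rw [hcard] at hb
    exact absurd hb (Finset.notMem_empty b)
  | succ s ih =>
    intro g hcard hg b hb
    have hgne : g ≠ 0 := by rintro rfl; simp at hb
    obtain ⟨c, hcsupp, hceq⟩ := AddMonoidAlgebra.exists_supDegree_mem_support (⇑mo.toSyn) hgne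
    have hcmax : ∀ b ∈ g.support, mo.toSyn b ≤ mo.toSyn c := fun b hb =>
      hceq ▸ Finset.le_sup (f := ⇑mo.toSyn) hb
    have hfne : f ≠ 0 := fun h => hfI (h ▸ Submodule.zero_mem I)
    have hspos : 0 < f.support.card :=
      Finset.card_pos.mpr (MvPolynomial.support_nonempty.mpr hfne)
    have hmono : monomial c (1:K) ∈ P := by
      have hkb := keyB hIA (MvPolynomial.mem_support_iff.mp hcsupp) hcmax
        f.support.card f le_rfl ((hP g).mp hg)
      have hpow : (monomial c (1:K)) ^ f.support.card ∈ P := by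
        rw [monomial_pow, one_pow]
        exact (hP _).mpr hkb
      exact (hprime.pow_mem_iff_mem _ hspos).mp hpow
    by_cases hbc : b = c
    · rwa [hbc]
    · set g' := g - monomial c (g.coeff c) with hg'
      have hg'P : g' ∈ P := by
        refine Submodule.sub_mem _ hg ?_
        have : monomial c (g.coeff c) = C (g.coeff c) * monomial c 1 := by
          rw [C_mul_monomial, mul_one]
        rw [this]; exact Ideal.mul_mem_left _ _ hmono
      have hsub : g'.support ⊆ g.support.erase c := by
        intro e he
        rw [MvPolynomial.mem_support_iff, hg', MvPolynomial.coeff_sub, coeff_monomial] at he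
        by_cases hec : c = e
        · rw [if_pos hec] at he; subst hec; simp at he
        · rw [if_neg hec, sub_zero] at he
          exact Finset.mem_erase.mpr ⟨fun h => hec h.symm, MvPolynomial.mem_support_iff.mpr he⟩
      have hcard' : g'.support.card ≤ s := by
        calc g'.support.card ≤ (g.support.erase c).card := Finset.card_le_card hsub
          _ = g.support.card - 1 := Finset.card_erase_of_mem hcsupp
          _ ≤ s := by omega
      have hb' : b ∈ g'.support := by
        rw [MvPolynomial.mem_support_iff, hg', MvPolynomial.coeff_sub, coeff_monomial,
          if_neg (fun h => hbc h.symm), sub_zero]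
        exact MvPolynomial.mem_support_iff.mp hb
      exact ih g' hcard' hg'P b hb'

lemma varDown {P : Ideal (MvPolynomial (Fin n) K)} (hprime : P.IsPrime)
    {f : MvPolynomial (Fin n) K}
    (hP : ∀ g : MvPolynomial (Fin n) K, g ∈ P ↔ g * f ∈ I)
    (hBorel : ∀ a : Fin n →₀ ℕ, monomial a (1 : K) ∈ I → ∀ i j : Fin n, j ≤ i →
      ∃ t : ℕ, monomial (Finsupp.single j t + a.erase i) (1 : K) ∈ I)
    {i j : Fin n} (hij : j ≤ i) (hi : X i ∈ P) : X j ∈ P := by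
  by_cases hji : j = i
  · rwa [hji]
  have key : ∀ b : Fin n →₀ ℕ, ∃ t : ℕ, b ∈ f.support →
      monomial (b + Finsupp.single j t) (1:K) ∈ I := by
    intro b
    by_cases hb : b ∈ f.support
    · have h1 : monomial (Finsupp.single i 1 + b) (1:K) ∈ I := by
        have hXf : X i * f ∈ I := (hP _).mp hi
        refine (memM_iff hIA _).mpr ((memI_iff hIA _).mp hXf _ ?_)
        rw [MvPolynomial.mem_support_iff, MvPolynomial.coeff_X_mul]
        exact MvPolynomial.mem_support_iff.mp hb
      obtain ⟨t, ht⟩ := hBorel _ h1 i j hij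
      refine ⟨t, fun _ => memUp hIA ht ?_⟩
      intro k
      rcases eq_or_ne k i with rfl | hki
      · simp [Finsupp.single_apply, hji]
      · rcases eq_or_ne k j with rfl | hkj
        · simp [Finsupp.single_apply, hki]
          omega
        · simp [Finsupp.single_apply, hki, hkj, Ne.symm hkj]
    · exact ⟨0, fun h => absurd h hb⟩
  choose t ht using key
  set T := f.support.sup t + 1 with hT
  have hXT : (X j : MvPolynomial (Fin n) K)^T * f ∈ I := by
    rw [X_pow_eq_monomial, memI_iff hIA]
    intro e he
    rw [MvPolynomial.mem_support_iff, MvPolynomial.coeff_monomial_mul'] at he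
    by_cases hle : Finsupp.single j T ≤ e
    · rw [if_pos hle, one_mul] at he
      set b := e - Finsupp.single j T with hbdef
      have hbs : b ∈ f.support := MvPolynomial.mem_support_iff.mpr he
      have h2 : monomial (b + Finsupp.single j T) (1:K) ∈ I := by
        refine memUp hIA (ht _ hbs) (add_le_add (le_refl b) ?_)
        have : t b ≤ f.support.sup t := Finset.le_sup hbs
        exact Finsupp.single_le_iff.mpr (by rw [Finsupp.single_eq_same]; omega)
      have heb : b + Finsupp.single j T = e := by
        rw [hbdef, tsub_add_cancel_of_le hle]
      rw [heb] at h2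
      exact (memM_iff hIA _).mp h2
    · rw [if_neg hle] at he; exact absurd rfl he
  have hpow : (X j : MvPolynomial (Fin n) K)^T ∈ P := (hP _).mpr hXT
  exact (hprime.pow_mem_iff_mem _ (by omega)).mp hpow

lemma existsVar {P : Ideal (MvPolynomial (Fin n) K)} (hprime : P.IsPrime) :
    ∀ (N : ℕ) (v : Fin n →₀ ℕ), (v.sum fun _ k => k) ≤ N → monomial v (1 : K) ∈ P →
      ∃ i, X i ∈ P ∧ v i ≠ 0 := by
  intro N
  induction N with
  | zero =>
    intro v hv hm
    have hz : ∀ k ∈ v.support, v k = 0 := by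
      have h0 : (v.sum fun _ k => k) = 0 := Nat.le_zero.mp hv
      exact fun k hk => Finset.sum_eq_zero_iff.mp h0 k hk
    have hv0 : v = 0 := by
      ext k
      rw [Finsupp.zero_apply]
      by_cases hk : k ∈ v.support
      · exact hz k hk
      · exact Finsupp.notMem_support_iff.mp hk
    rw [hv0, monomial_zero', C_1] at hm
    exact absurd ((Ideal.eq_top_iff_one P).mpr hm) hprime.ne_top
  | succ N ihN =>
    intro v hv hm
    by_cases hv0 : v = 0
    · rw [hv0, monomial_zero', C_1] at hm
      exact absurd ((Ideal.eq_top_iff_one P).mpr hm) hprime.ne_top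
    obtain ⟨i, hi⟩ := Finsupp.support_nonempty_iff.mpr hv0
    have hvi : v i ≠ 0 := Finsupp.mem_support_iff.mp hi
    set w := v - Finsupp.single i 1 with hw
    have hsw : Finsupp.single i 1 + w = v := by
      rw [hw, add_tsub_cancel_of_le (Finsupp.single_le_iff.mpr (by omega))]
    have hsplit : X i * monomial w (1:K) = monomial v (1:K) := by
      rw [X, monomial_mul, one_mul, hsw]
    rcases hprime.mem_or_mem (hsplit ▸ hm) with h | h
    · exact ⟨i, h, hvi⟩
    · have hwsum : (w.sum fun _ k => k) ≤ N := by
        have : (v.sum fun _ k => k) = 1 + (w.sum fun _ k => k) := by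
          rw [← hsw, Finsupp.sum_add_index' (fun _ => rfl) (fun _ _ _ => rfl),
            Finsupp.sum_single_index rfl]
        omega
      obtain ⟨k, hk, hwk⟩ := ihN w hwsum h
      refine ⟨k, hk, ?_⟩
      have : w k ≤ v k := by rw [← hsw]; simp
      omega

end

end BorelAuxiliary

/-- every associated prime of `S/I`, for an ideal `I` of Borel type, has the
form `(x_1, …, x_i)` for some `0 ≤ i ≤ n`. -/
theorem stmt1 {K : Type} [Field K] {n : ℕ} (I : Ideal (MvPolynomial (Fin n) K))
    (hI : IsBorelType I) :
    ∀ P ∈ associatedPrimes (MvPolynomial (Fin n) K) (MvPolynomial (Fin n) K ⧸ I),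
      ∃ i ≤ n, P = Ideal.span
        ((fun k => (X k : MvPolynomial (Fin n) K)) '' {k : Fin n | (k : ℕ) < i}) := by
  rintro P hP
  obtain ⟨hprime, x, hxann⟩ := isAssociatedPrime_iff.mp hP
  obtain ⟨A, hIA⟩ := hI.1
  obtain ⟨f, rfl⟩ := Ideal.Quotient.mk_surjective x
  have hsm : ∀ g : MvPolynomial (Fin n) K,
      g • (Ideal.Quotient.mk I f) = Ideal.Quotient.mk I (g * f) := fun g => rfl
  have hPmem : ∀ g : MvPolynomial (Fin n) K, g ∈ P ↔ g * f ∈ I := by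
    intro g
    rw [hxann, Submodule.mem_colon_singleton, Submodule.mem_bot, hsm,
      Ideal.Quotient.eq_zero_iff_mem]
  have hfI : f ∉ I := by
    intro h
    have h1 : (1 : MvPolynomial (Fin n) K) ∈ P := (hPmem 1).mpr (by simpa using h)
    exact hprime.ne_top ((Ideal.eq_top_iff_one P).mpr h1)
  have hdown : ∀ i j : Fin n, j ≤ i → X i ∈ P → X j ∈ P := fun i j hij hi =>
    varDown hIA hprime hPmem hI.2 hij hi
  set S : Set ℕ := {m : ℕ | ∀ k : Fin n, X k ∈ P → (k : ℕ) < m} with hS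
  set i₀ := sInf S with hi₀
  have hne : n ∈ S := fun k _ => k.isLt
  have hub : ∀ k : Fin n, X k ∈ P → (k:ℕ) < i₀ := Nat.sInf_mem ⟨n, hne⟩
  have hi₀n : i₀ ≤ n := Nat.sInf_le hne
  have hBeq : {k : Fin n | X k ∈ P} = {k : Fin n | (k:ℕ) < i₀} := by
    ext k
    simp only [Set.mem_setOf_eq]
    constructor
    · exact hub k
    · intro hk
      by_contra hkP
      have hmem : (k:ℕ) ∈ S := by
        intro k' hk'
        by_contra hlt
        push_neg at hlt
        exact hkP (hdown k' k (Fin.le_def.mpr hlt) hk')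
      have := Nat.sInf_le hmem
      omega
  refine ⟨i₀, hi₀n, ?_⟩
  rw [← hBeq]
  apply le_antisymm
  · intro g hg
    have hmonos : ∀ b ∈ g.support, monomial b (1:K) ∈ P :=
      keyA hIA hprime hfI hPmem g.support.card g le_rfl hg
    have hterm : ∀ b ∈ g.support, monomial b (g.coeff b) ∈
        Ideal.span ((fun k => (X k : MvPolynomial (Fin n) K)) '' {k : Fin n | X k ∈ P}) := by
      intro b hb
      obtain ⟨i, hiP, hbi⟩ := existsVar hIA hprime (b.sum fun _ k => k) b le_rfl (hmonos b hb)
      have hsplit : monomial (b - Finsupp.single i 1) (g.coeff b) * X i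
          = monomial b (g.coeff b) := by
        rw [X, monomial_mul, mul_one,
          tsub_add_cancel_of_le (Finsupp.single_le_iff.mpr (by omega))]
      rw [← hsplit]
      exact Ideal.mul_mem_left _ _ (Ideal.subset_span ⟨i, hiP, rfl⟩)
    rw [MvPolynomial.as_sum g]
    exact Ideal.sum_mem _ hterm
  · rw [Ideal.span_le]
    rintro _ ⟨k, hk, rfl⟩
    exact hk
end

section
/- Let I be an ideal of Borel type in K[x_1,...,x_n]. If (x_1^{c_1}···x_j^{c_j}, {x_{j+1},...,x_n}) is a standard pair with respect to I, then 0 ≤ c_i ≤ Md_i(I) − 1 for all i = 1,...,j. In particular std_r(I) ≤ Md_1(I)·Md_2(I)···Md_{n−r}(I) for all r = 0,...,n−1. -/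
open MvPolynomial

section AuxLemmas

variable {K : Type} [Field K] {n : ℕ}

/-- Monomial membership in an ideal is monotone in the exponent. -/
lemma monomial_mem_mono {I : Ideal (MvPolynomial (Fin n) K)} {c d : Fin n →₀ ℕ}
    (h : monomial c (1 : K) ∈ I) (hcd : c ≤ d) : monomial d (1 : K) ∈ I := by
  have hd : monomial d (1 : K) = monomial (d - c) (1 : K) * monomial c (1 : K) := by
    rw [monomial_mul, one_mul, tsub_add_cancel_of_le hcd]
  rw [hd]
  exact I.mul_mem_left _ h

/-- Descent to a minimal monomial generator. -/
lemma exists_minGen_le (I : Ideal (MvPolynomial (Fin n) K)) :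
    ∀ (N : ℕ) (c : Fin n →₀ ℕ), (∑ i, c i) ≤ N → monomial c (1 : K) ∈ I →
      ∃ u ∈ minMonomialGens I, u ≤ c := by
  intro N
  induction N with
  | zero =>
    intro c hc h
    refine ⟨c, ⟨h, fun i hi _ => ?_⟩, le_rfl⟩
    have hz : c i = 0 :=
      Finset.sum_eq_zero_iff.mp (Nat.le_zero.mp hc) i (Finset.mem_univ i)
    exact absurd hz (Finsupp.mem_support_iff.mp hi)
  | succ N ih =>
    intro c hc h
    by_cases hex : ∃ i ∈ c.support, monomial (c - Finsupp.single i 1) (1 : K) ∈ I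
    · obtain ⟨i, hi, hm⟩ := hex
      have hci : c i ≠ 0 := Finsupp.mem_support_iff.mp hi
      have hlt : (∑ i', (c - Finsupp.single i 1 : Fin n →₀ ℕ) i') < ∑ i', c i' := by
        apply Finset.sum_lt_sum
        · intro j _
          rw [Finsupp.tsub_apply]
          exact Nat.sub_le _ _
        · refine ⟨i, Finset.mem_univ i, ?_⟩
          rw [Finsupp.tsub_apply, Finsupp.single_eq_same]
          exact Nat.sub_lt (Nat.pos_of_ne_zero hci) one_pos
      obtain ⟨u, hu, hle⟩ := ih _ (Nat.lt_succ_iff.mp (lt_of_lt_of_le hlt hc)) hm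
      exact ⟨u, hu, hle.trans tsub_le_self⟩
    · push_neg at hex
      exact ⟨c, ⟨h, hex⟩, le_rfl⟩

lemma minGens_antichain (I : Ideal (MvPolynomial (Fin n) K)) :
    IsAntichain (· ≤ ·) (minMonomialGens I) := by
  intro u hu v hv hne hle
  have hex : ∃ i, u i < v i := by
    by_contra hcon
    push_neg at hcon
    exact hne (le_antisymm hle (Finsupp.le_def.mpr hcon))
  obtain ⟨i, hi⟩ := hex
  have hvi : i ∈ v.support := Finsupp.mem_support_iff.mpr (by omega)
  apply hv.2 i hvi
  apply monomial_mem_mono hu.1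
  refine Finsupp.le_def.mpr fun j => ?_
  rw [Finsupp.tsub_apply]
  rcases eq_or_ne j i with rfl | hji
  · rw [Finsupp.single_eq_same]; omega
  · rw [Finsupp.single_eq_of_ne' (Ne.symm hji)]
    have := Finsupp.le_def.mp hle j
    omega

lemma minGens_finite (I : Ideal (MvPolynomial (Fin n) K)) : (minMonomialGens I).Finite := by
  have himg : IsAntichain (· ≤ ·)
      ((fun f : Fin n →₀ ℕ => (f : Fin n → ℕ)) '' minMonomialGens I) := by
    rintro _ ⟨u, hu, rfl⟩ _ ⟨v, hv, rfl⟩ hne hle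
    exact minGens_antichain I hu hv (fun h => hne (by rw [h]))
      (Finsupp.le_def.mpr fun i => hle i)
  have hpwo : Set.IsPWO ((fun f : Fin n →₀ ℕ => (f : Fin n → ℕ)) '' minMonomialGens I) :=
    Set.isPWO_of_wellQuasiOrderedLE _
  have hfin := himg.finite_of_partiallyWellOrderedOn hpwo
  exact Set.Finite.of_finite_image hfin (fun u _ v _ h => DFunLike.coe_injective h)

lemma le_Md {I : Ideal (MvPolynomial (Fin n) K)} {u : Fin n →₀ ℕ}
    (hu : u ∈ minMonomialGens I) (k : Fin n) : u k ≤ Md I k :=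
  le_csSup (((minGens_finite I).image _).bddAbove) ⟨u, hu, rfl⟩

/-- Borel pushdown: kill all exponents with index `≥ j`, enlarging only index `k < j`. -/
lemma pushdown {I : Ideal (MvPolynomial (Fin n) K)} (hI : IsBorelType I) (j : ℕ) (k : Fin n)
    (hk : (k : ℕ) < j) :
    ∀ (N : ℕ) (c : Fin n →₀ ℕ),
      (∑ i ∈ Finset.univ.filter (fun i : Fin n => j ≤ (i : ℕ)), c i) ≤ N →
      monomial c (1 : K) ∈ I →
      ∃ d : Fin n →₀ ℕ, monomial d (1 : K) ∈ I ∧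
        (∀ i : Fin n, (i : ℕ) < j → i ≠ k → d i = c i) ∧
        (∀ i : Fin n, j ≤ (i : ℕ) → d i = 0) := by
  intro N
  induction N with
  | zero =>
    intro c hc h
    refine ⟨c, h, fun _ _ _ => rfl, fun i hi => ?_⟩
    exact Finset.sum_eq_zero_iff.mp (Nat.le_zero.mp hc) i
      (Finset.mem_filter.mpr ⟨Finset.mem_univ _, hi⟩)
  | succ N ih =>
    intro c hc h
    by_cases h0 : ∀ i : Fin n, j ≤ (i : ℕ) → c i = 0
    · exact ⟨c, h, fun _ _ _ => rfl, h0⟩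
    · push_neg at h0
      obtain ⟨i, hij, hci⟩ := h0
      have hki : k ≤ i := Fin.le_def.mpr (le_trans (le_of_lt hk) hij)
      obtain ⟨t, ht⟩ := hI.2 c h i k hki
      set c' := Finsupp.single k t + c.erase i with hc'
      have happ : ∀ i' : Fin n, i' ≠ k → i' ≠ i → c' i' = c i' := by
        intro i' h1 h2
        simp [hc', Finsupp.single_eq_of_ne' (Ne.symm h1), Finsupp.erase_ne h2]
      have happ0 : ∀ i' : Fin n, j ≤ (i' : ℕ) → c' i' = (if i' = i then 0 else c i') := by
        intro i' hi'
        have hik : i' ≠ k := by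
          intro e
          rw [e] at hi'
          omega
        rcases eq_or_ne i' i with rfl | hne
        · simp [hc', Finsupp.single_eq_of_ne' (Ne.symm hik), Finsupp.erase_same]
        · simp [hne, happ i' hik hne]
      have hsum : (∑ i' ∈ Finset.univ.filter (fun i' : Fin n => j ≤ (i' : ℕ)), c' i') ≤ N := by
        have hlt : (∑ i' ∈ Finset.univ.filter (fun i' : Fin n => j ≤ (i' : ℕ)), c' i')
            < ∑ i' ∈ Finset.univ.filter (fun i' : Fin n => j ≤ (i' : ℕ)), c i' := by
          apply Finset.sum_lt_sum
          · intro i' hi'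
            rw [happ0 i' (Finset.mem_filter.mp hi').2]
            split <;> omega
          · refine ⟨i, Finset.mem_filter.mpr ⟨Finset.mem_univ _, hij⟩, ?_⟩
            rw [happ0 i hij, if_pos rfl]
            omega
        omega
      obtain ⟨d, hd, hd1, hd2⟩ := ih c' hsum ht
      refine ⟨d, hd, ?_, hd2⟩
      intro i' hi' hik
      have hii : i' ≠ i := by
        intro e
        rw [e] at hi'
        omega
      rw [hd1 i' hi' hik, happ i' hik hii]

lemma cone_erase (a : Fin n →₀ ℕ) (Z : Finset (Fin n)) (k : Fin n) :
    ConeLE a Z (a.erase k) (insert k Z) := by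
  intro b hb
  refine ⟨b + Finsupp.single k (a k), ?_, ?_⟩
  · intro i hi
    rcases Finset.mem_union.mp (Finsupp.support_add hi) with h | h
    · exact Finset.mem_insert.mpr (Or.inr (hb i h))
    · have h2 := Finsupp.support_single_subset h
      simp only [Finset.mem_singleton] at h2
      exact Finset.mem_insert.mpr (Or.inl h2)
  · ext i
    rcases eq_or_ne i k with rfl | hne
    · simp [Finsupp.erase_same, add_comm]
    · simp [Finsupp.erase_ne hne, Finsupp.single_eq_of_ne' (Ne.symm hne)]

lemma not_adm_erase {I : Ideal (MvPolynomial (Fin n) K)} {a : Fin n →₀ ℕ} {Z : Finset (Fin n)}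
    (hsp : IsStandardPair I a Z) {k : Fin n} (hk : k ∉ Z) :
    ∃ b : Fin n →₀ ℕ, (∀ i ∈ b.support, i ∈ insert k Z) ∧
      monomial (a.erase k + b) (1 : K) ∈ I := by
  have hne : (a, Z) ≠ (a.erase k, insert k Z) := by
    intro h
    have h2 : Z = insert k Z := congrArg Prod.snd h
    exact hk (by rw [h2]; exact Finset.mem_insert_self k Z)
  have hnadm : ¬ IsAdmissiblePair I (a.erase k) (insert k Z) :=
    fun h => hsp.2 _ _ h hne (cone_erase a Z k)
  by_contra hcon
  push_neg at hcon
  apply hnadm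
  constructor
  · intro i hi
    rw [Finsupp.support_erase] at hi
    intro hmem
    rcases Finset.mem_insert.mp hmem with rfl | hZ
    · exact (Finset.notMem_erase i a.support) hi
    · exact hsp.1.1 i (Finset.mem_of_mem_erase hi) hZ
  · exact fun b hb => hcon b hb

lemma standard_upclosed {I : Ideal (MvPolynomial (Fin n) K)} (hI : IsBorelType I)
    {a : Fin n →₀ ℕ} {Z : Finset (Fin n)} (hsp : IsStandardPair I a Z) :
    ∀ i ∈ Z, ∀ i' : Fin n, i ≤ i' → i' ∈ Z := by
  intro i hi i' hle
  by_contra hi'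
  obtain ⟨b, hb, hmem⟩ := not_adm_erase hsp hi'
  obtain ⟨t, ht⟩ := hI.2 _ hmem i' i hle
  set b'' := Finsupp.single i t + b.erase i' with hb''
  have key : Finsupp.single i t + (a.erase i' + b).erase i' = a.erase i' + b'' := by
    ext x
    rcases eq_or_ne x i' with rfl | hne
    · simp [hb'', Finsupp.erase_same]
    · simp only [hb'', Finsupp.add_apply, Finsupp.erase_ne hne]
      omega
  rw [key] at ht
  have hb''supp : ∀ x ∈ b''.support, x ∈ Z := by
    intro x hx
    rcases Finset.mem_union.mp (Finsupp.support_add hx) with h | h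
    · have h2 := Finsupp.support_single_subset h
      simp only [Finset.mem_singleton] at h2
      rw [h2]
      exact hi
    · rw [Finsupp.support_erase] at h
      have hxne : x ≠ i' := (Finset.mem_erase.mp h).1
      rcases Finset.mem_insert.mp (hb x (Finset.mem_of_mem_erase h)) with h' | h'
      · exact absurd h' hxne
      · exact h'
  have hmem2 : monomial (a + b'') (1 : K) ∈ I := by
    apply monomial_mem_mono ht
    refine Finsupp.le_def.mpr fun x => ?_
    simp only [Finsupp.add_apply]
    have hax : a.erase i' x ≤ a x := by
      rcases eq_or_ne x i' with rfl | hne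
      · simp [Finsupp.erase_same]
      · simp [Finsupp.erase_ne hne]
    omega
  exact hsp.1.2 b'' hb''supp hmem2

/-- Core of statement (1): exponents of standard pairs of tail type are bounded by `Md`. -/
lemma part1_core {I : Ideal (MvPolynomial (Fin n) K)} (hI : IsBorelType I) (j : ℕ)
    (a : Fin n →₀ ℕ) (ha : ∀ k : Fin n, j ≤ (k : ℕ) → a k = 0)
    (hsp : IsStandardPair I a (Finset.univ.filter fun k : Fin n => j ≤ (k : ℕ)))
    (k : Fin n) (hk : (k : ℕ) < j) : a k < Md I k := by
  have hkZ : k ∉ Finset.univ.filter (fun k : Fin n => j ≤ (k : ℕ)) := by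
    simp only [Finset.mem_filter, Finset.mem_univ, true_and]
    omega
  obtain ⟨b, hb, hmem⟩ := not_adm_erase hsp hkZ
  obtain ⟨d, hd, hd1, hd2⟩ := pushdown hI j k hk _ _ le_rfl hmem
  obtain ⟨u, hu, hule⟩ := exists_minGen_le I _ _ le_rfl hd
  by_contra hcon
  push_neg at hcon
  have hle_a : u ≤ a := by
    refine Finsupp.le_def.mpr fun i => ?_
    rcases eq_or_ne i k with rfl | hne
    · exact le_trans (le_Md hu i) hcon
    · by_cases hij : (i : ℕ) < j
      · have hbi : b i = 0 := by
          by_contra hb0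
          rcases Finset.mem_insert.mp (hb i (Finsupp.mem_support_iff.mpr hb0)) with h | h
          · exact hne h
          · simp only [Finset.mem_filter, Finset.mem_univ, true_and] at h
            omega
        have hdi : d i = a i := by
          rw [hd1 i hij hne]
          simp [Finsupp.erase_ne hne, hbi]
        exact hdi ▸ (Finsupp.le_def.mp hule i)
      · rw [ha i (by omega)]
        have h1 := hd2 i (by omega)
        have h2 := Finsupp.le_def.mp hule i
        omega
  have hmemA : monomial a (1 : K) ∈ I := monomial_mem_mono hu.1 hle_a
  have hnot := hsp.1.2 0 (by simp)
  rw [add_zero] at hnot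
  exact hnot hmemA

lemma card_filter_fin_lt {m : ℕ} (hm : m ≤ n) :
    (Finset.univ.filter fun k : Fin n => (k : ℕ) < m).card = m := by
  rw [← Finset.card_range m]
  apply Finset.card_bij (fun (k : Fin n) _ => (k : ℕ))
  · intro a ha
    simpa using (Finset.mem_filter.mp ha).2
  · intro a _ b _ h
    exact Fin.val_injective h
  · intro t ht
    refine ⟨⟨t, lt_of_lt_of_le (Finset.mem_range.mp ht) hm⟩, ?_, rfl⟩
    simp [Finset.mem_range.mp ht]

lemma card_filter_fin_le {m : ℕ} (hm : m ≤ n) :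
    (Finset.univ.filter fun k : Fin n => m ≤ (k : ℕ)).card = n - m := by
  classical
  have h1 := Finset.card_filter_add_card_filter_not
      (s := (Finset.univ : Finset (Fin n))) (p := fun k : Fin n => (k : ℕ) < m)
  rw [Finset.card_univ, Fintype.card_fin] at h1
  have h2 : Finset.univ.filter (fun k : Fin n => ¬ (k : ℕ) < m)
      = Finset.univ.filter (fun k : Fin n => m ≤ (k : ℕ)) :=
    Finset.filter_congr fun x _ => by simp [not_lt]
  rw [h2, card_filter_fin_lt hm] at h1
  omega

lemma upclosed_eq_filter {Z : Finset (Fin n)}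
    (h : ∀ i ∈ Z, ∀ i' : Fin n, i ≤ i' → i' ∈ Z) :
    Z = Finset.univ.filter fun k : Fin n => n - Z.card ≤ (k : ℕ) := by
  rcases Z.eq_empty_or_nonempty with rfl | hne
  · symm
    rw [Finset.filter_eq_empty_iff]
    intro k _
    have hlt := k.isLt
    simp only [Finset.card_empty, Nat.sub_zero]
    omega
  · set m := Z.min' hne with hm
    have hZ : Z = Finset.univ.filter fun k : Fin n => (m : ℕ) ≤ (k : ℕ) := by
      ext k
      simp only [Finset.mem_filter, Finset.mem_univ, true_and]
      constructor
      · intro hk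
        exact Fin.le_def.mp (Z.min'_le k hk)
      · intro hk
        exact h m (Z.min'_mem hne) k (Fin.le_def.mpr hk)
    have hmn : (m : ℕ) ≤ n := le_of_lt m.isLt
    have hcard : Z.card = n - (m : ℕ) := by rw [hZ, card_filter_fin_le hmn]
    rw [hcard, Nat.sub_sub_self hmn]
    exact hZ

end AuxLemmas

/-- for an ideal `I` of Borel type, every standard pair
`(x_1^{c_1} ⋯ x_j^{c_j}, {x_{j+1}, …, x_n})` satisfies `0 ≤ c_i ≤ Md_i(I) − 1` for
`i = 1, …, j`; in particular `std_r(I) ≤ Md_1(I) ⋯ Md_{n−r}(I)` for `r = 0, …, n−1`. -/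
theorem stmt10 {K : Type} [Field K] {n : ℕ} (I : Ideal (MvPolynomial (Fin n) K))
    (hI : IsBorelType I) :
    (∀ j : ℕ, j ≤ n → ∀ a : Fin n →₀ ℕ, (∀ k : Fin n, j ≤ (k : ℕ) → a k = 0) →
      IsStandardPair I a (Finset.univ.filter fun k : Fin n => j ≤ (k : ℕ)) →
      ∀ k : Fin n, (k : ℕ) < j → a k < Md I k) ∧
    (∀ r < n, stdR I r ≤
      ∏ k ∈ Finset.univ.filter (fun k : Fin n => (k : ℕ) < n - r), Md I k) := by
  constructor
  · intro j _ a ha hsp k hk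
    exact part1_core hI j a ha hsp k hk
  · intro r hr
    classical
    have key : ∀ p : (Fin n →₀ ℕ) × Finset (Fin n),
        IsStandardPair I p.1 p.2 → p.2.card = r →
        (p.2 = Finset.univ.filter fun k : Fin n => n - r ≤ (k : ℕ)) ∧
        (∀ k : Fin n, n - r ≤ (k : ℕ) → p.1 k = 0) ∧
        (∀ k : Fin n, (k : ℕ) < n - r → p.1 k < Md I k) := by
      intro p hsp hcard
      have hZ : p.2 = Finset.univ.filter fun k : Fin n => n - r ≤ (k : ℕ) := by
        have h := upclosed_eq_filter (standard_upclosed hI hsp)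
        rwa [hcard] at h
      have ha : ∀ k : Fin n, n - r ≤ (k : ℕ) → p.1 k = 0 := by
        intro k hk
        by_contra h0
        refine hsp.1.1 k (Finsupp.mem_support_iff.mpr h0) ?_
        rw [hZ]
        exact Finset.mem_filter.mpr ⟨Finset.mem_univ _, hk⟩
      refine ⟨hZ, ha, fun k hk => ?_⟩
      have hsp' : IsStandardPair I p.1
          (Finset.univ.filter fun k : Fin n => n - r ≤ (k : ℕ)) := by
        rw [← hZ]
        exact hsp
      exact part1_core hI (n - r) p.1 ha hsp' k hk
    let T := ∀ k : (Finset.univ.filter fun k : Fin n => (k : ℕ) < n - r),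
        Fin (Md I (k : Fin n))
    let f : {p : (Fin n →₀ ℕ) × Finset (Fin n) //
        IsStandardPair I p.1 p.2 ∧ p.2.card = r} → T := fun q k =>
      ⟨q.1.1 (k : Fin n),
        (key q.1 q.2.1 q.2.2).2.2 (k : Fin n) (Finset.mem_filter.mp k.2).2⟩
    have hinj : Function.Injective f := by
      intro q1 q2 heq
      have h1 := key q1.1 q1.2.1 q1.2.2
      have h2 := key q2.1 q2.2.1 q2.2.2
      apply Subtype.ext
      have haeq : q1.1.1 = q2.1.1 := by
        ext i
        by_cases hi : (i : ℕ) < n - r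
        · have hcf := congrFun heq ⟨i, Finset.mem_filter.mpr ⟨Finset.mem_univ _, hi⟩⟩
          exact congrArg Fin.val hcf
        · rw [h1.2.1 i (by omega), h2.2.1 i (by omega)]
      exact Prod.ext haeq (h1.1.trans h2.1.symm)
    have hcount : Nat.card T
        = ∏ k ∈ Finset.univ.filter (fun k : Fin n => (k : ℕ) < n - r), Md I k := by
      rw [Nat.card_eq_fintype_card, Fintype.card_pi]
      simp only [Fintype.card_fin]
      rw [Finset.univ_eq_attach, Finset.prod_attach]
    calc stdR I r ≤ Nat.card T := Nat.card_le_card_of_injective f hinj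
      _ = _ := hcount
end

section
/- Let I be the smallest strongly stable ideal in K[x_1,...,x_n] containing the monomial u = x_1^{l_1}···x_n^{l_n}. For all j = 1,...,n, x_1^{c_1}···x_j^{c_j}·K[x_{j+1},...,x_n] ∩ I = {0} if and only if c_1 ≤ l_1 − 1, or c_1 + c_2 ≤ l_1 + l_2 − 1, or ..., or c_1 + ··· + c_j ≤ l_1 + ··· + l_j − 1. -/
open MvPolynomial

namespace Stmt13Aux

variable {K : Type} [Field K] {n : ℕ}

def psum (m : Fin n →₀ ℕ) (i : ℕ) : ℕ :=
  ∑ k ∈ Finset.univ.filter (fun k : Fin n => (k : ℕ) ≤ i), m k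

lemma psum_add (a b : Fin n →₀ ℕ) (i : ℕ) : psum (a + b) i = psum a i + psum b i := by
  simp [psum, Finset.sum_add_distrib]

lemma psum_single (k0 : Fin n) (c : ℕ) (i : ℕ) :
    psum (Finsupp.single k0 c) i = if (k0 : ℕ) ≤ i then c else 0 := by
  classical
  simp only [psum, Finsupp.single_apply]
  rw [Finset.sum_ite_eq]
  simp

lemma psum_le_tot (m : Fin n →₀ ℕ) (i : ℕ) : psum m i ≤ ∑ k, m k :=
  Finset.sum_le_sum_of_subset (Finset.filter_subset _ _)

lemma psum_eq_tot {m : Fin n →₀ ℕ} {i : ℕ} (h : ∀ k ∈ m.support, (k : ℕ) ≤ i) :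
    psum m i = ∑ k, m k := by
  unfold psum
  refine (Finset.sum_subset (f := fun k => m k)
    (Finset.filter_subset (fun k : Fin n => (k : ℕ) ≤ i) Finset.univ) ?_)
  intro k _ hk
  by_contra hk0
  exact hk (Finset.mem_filter.2 ⟨Finset.mem_univ k, h k (Finsupp.mem_support_iff.2 hk0)⟩)

lemma psum_eq_tot' {m : Fin n →₀ ℕ} {i : ℕ} (h : n ≤ i + 1) : psum m i = ∑ k, m k :=
  psum_eq_tot fun k _ => by have := k.isLt; omega

def Dom (l m : Fin n →₀ ℕ) : Prop := ∀ i : ℕ, psum l i ≤ psum m i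

def wt (m : Fin n →₀ ℕ) : ℕ := ∑ k : Fin n, (n - (k : ℕ)) * m k

lemma wt_add (a b : Fin n →₀ ℕ) : wt (a + b) = wt a + wt b := by
  simp [wt, Nat.mul_add, Finset.sum_add_distrib]

lemma wt_single (k0 : Fin n) (c : ℕ) : wt (Finsupp.single k0 c) = (n - (k0 : ℕ)) * c := by
  classical
  simp only [wt, Finsupp.single_apply, mul_ite, mul_zero]
  rw [Finset.sum_ite_eq]
  simp

lemma dom_mono {l a b : Fin n →₀ ℕ} (hab : a ≤ b) (h : Dom l a) : Dom l b := fun i =>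
  (h i).trans (Finset.sum_le_sum fun k _ => Finsupp.le_def.1 hab k)

lemma mem_of_dom (l : Fin n →₀ ℕ) (J : Ideal (MvPolynomial (Fin n) K))
    (hss : ∀ a : Fin n →₀ ℕ, monomial a (1 : K) ∈ J → ∀ i j : Fin n, j ≤ i → a i ≠ 0 →
      monomial (a - Finsupp.single i 1 + Finsupp.single j 1) (1 : K) ∈ J)
    (hl : monomial l (1 : K) ∈ J) :
    ∀ N : ℕ, ∀ m : Fin n →₀ ℕ, wt m = N → Dom l m → monomial m (1 : K) ∈ J := by
  intro N
  induction N using Nat.strong_induction_on with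
  | _ N ih =>
  intro m hw hdom
  have htl : ∑ k, l k ≤ ∑ k, m k := by
    have h := hdom n
    rwa [psum_eq_tot' (by omega), psum_eq_tot' (by omega)] at h
  rcases Nat.lt_or_ge (∑ k, l k) (∑ k, m k) with h1 | h2
  · -- total degree too big: strip off the last variable
    have hm0 : m.support.Nonempty := by
      by_contra h
      rw [Finset.not_nonempty_iff_eq_empty, Finsupp.support_eq_empty] at h
      subst h
      simp at h1
    set i := m.support.max' hm0 with hi
    have hi0 : m i ≠ 0 := Finsupp.mem_support_iff.1 (m.support.max'_mem hm0)
    have hmax : ∀ k ∈ m.support, k ≤ i := fun k hk => m.support.le_max' k hk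
    have hsub : Finsupp.single i 1 ≤ m := by
      rw [Finsupp.single_le_iff]
      omega
    have hmm : m - Finsupp.single i 1 + Finsupp.single i 1 = m := tsub_add_cancel_of_le hsub
    set m' := m - Finsupp.single i 1 with hm'
    have hdom' : Dom l m' := by
      intro t
      have hadd : psum m' t + psum (Finsupp.single i 1) t = psum m t := by
        rw [← psum_add, hmm]
      rw [psum_single] at hadd
      by_cases hit : (i : ℕ) ≤ t
      · have e1 : psum m t = ∑ k, m k :=
          psum_eq_tot fun k hk => le_trans (by exact_mod_cast hmax k hk) hit
        have e2 := psum_le_tot l t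
        rw [if_pos hit] at hadd
        omega
      · rw [if_neg hit] at hadd
        have := hdom t
        omega
    have hwt : wt m = wt m' + (n - (i : ℕ)) := by
      conv_lhs => rw [← hmm]
      rw [wt_add, wt_single, mul_one]
    have hlt : wt m' < N := by
      have := i.isLt
      omega
    have hm'mem := ih (wt m') hlt m' rfl hdom'
    have : monomial m (1 : K) = monomial m' 1 * monomial (Finsupp.single i 1) 1 := by
      rw [monomial_mul, one_mul, hmm]
    rw [this]
    exact Ideal.mul_mem_right _ _ hm'mem
  · -- equal total degrees
    by_cases hml : m = l
    · rw [hml]; exact hl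
    have hne : (Finset.univ.filter fun k : Fin n => m k ≠ l k).Nonempty := by
      obtain ⟨k, hk⟩ : ∃ k, m k ≠ l k := by
        by_contra h
        push_neg at h
        exact hml (Finsupp.ext h)
      exact ⟨k, by simp [hk]⟩
    set s := Finset.min' _ hne with hs
    have hsprop : m s ≠ l s := by
      have := Finset.min'_mem _ hne
      simpa using this
    have hpre : ∀ k : Fin n, k < s → m k = l k := by
      intro k hk
      by_contra h
      exact absurd (Finset.min'_le _ k (by simp [h])) (not_le.2 hk)
    have hms : l s < m s := by
      have hd := hdom (s : ℕ)
      set F := Finset.univ.filter (fun k : Fin n => (k : ℕ) ≤ (s : ℕ)) with hF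
      have hFs : s ∈ F := by simp [hF]
      have e1 : ∑ k ∈ F.erase s, m k + m s = psum m (s : ℕ) :=
        Finset.sum_erase_add _ _ hFs
      have e2 : ∑ k ∈ F.erase s, l k + l s = psum l (s : ℕ) :=
        Finset.sum_erase_add _ _ hFs
      have e3 : ∑ k ∈ F.erase s, m k = ∑ k ∈ F.erase s, l k := by
        refine Finset.sum_congr rfl fun k hk => hpre k ?_
        have h1 := Finset.mem_erase.1 hk
        have h2 : (k : ℕ) ≤ (s : ℕ) := by
          have := Finset.mem_filter.1 h1.2
          exact this.2
        have h3 : (k : ℕ) ≠ (s : ℕ) := fun h => h1.1 (Fin.ext h)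
        rw [Fin.lt_def]
        omega
      omega
    obtain ⟨t0, ht0⟩ : ∃ t : Fin n, s < t ∧ m t < l t := by
      by_contra h
      push_neg at h
      have : ∑ k, l k < ∑ k, m k := by
        refine Finset.sum_lt_sum (fun k _ => ?_) ⟨s, Finset.mem_univ s, hms⟩
        rcases lt_trichotomy k s with hk | hk | hk
        · exact (hpre k hk).ge
        · subst hk; exact hms.le
        · exact h k hk
      omega
    have hneT : (Finset.univ.filter fun k : Fin n => s < k ∧ m k < l k).Nonempty :=
      ⟨t0, by simp [ht0.1, ht0.2]⟩
    set t := Finset.min' _ hneT with ht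
    have htprop : s < t ∧ m t < l t := by
      have h := Finset.min'_mem _ hneT
      rw [Finset.mem_filter] at h
      exact h.2
    have hst : s < t := htprop.1
    have hmid : ∀ k : Fin n, s < k → k < t → l k ≤ m k := by
      intro k hk1 hk2
      by_contra h
      push_neg at h
      exact absurd (Finset.min'_le _ k (by simp [hk1, h])) (not_le.2 hk2)
    have hs1 : Finsupp.single s 1 ≤ m := by
      rw [Finsupp.single_le_iff]
      omega
    have hm1 : m - Finsupp.single s 1 + Finsupp.single s 1 = m := tsub_add_cancel_of_le hs1
    set m' := m - Finsupp.single s 1 + Finsupp.single t 1 with hm'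
    have hm't : m' t ≠ 0 := by
      rw [hm', Finsupp.add_apply, Finsupp.single_eq_same]
      omega
    have hback : m' - Finsupp.single t 1 + Finsupp.single s 1 = m := by
      rw [hm', add_tsub_cancel_right, hm1]
    have hdom' : Dom l m' := by
      intro i
      have k1 : psum (m - Finsupp.single s 1) i + psum (Finsupp.single s 1) i = psum m i := by
        rw [← psum_add, hm1]
      have k2 : psum m' i = psum (m - Finsupp.single s 1) i + psum (Finsupp.single t 1) i :=
        psum_add _ _ _
      rw [psum_single] at k1 k2
      have hd := hdom i
      by_cases hsi : (s : ℕ) ≤ i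
      · by_cases hti : (t : ℕ) ≤ i
        · rw [if_pos hsi] at k1; rw [if_pos hti] at k2; omega
        · rw [if_pos hsi] at k1; rw [if_neg hti] at k2
          have hstrict : psum l i < psum m i := by
            refine Finset.sum_lt_sum (fun k hk => ?_) ⟨s, by simp [hsi], hms⟩
            have hki : (k : ℕ) ≤ i := (Finset.mem_filter.1 hk).2
            rcases lt_trichotomy k s with h' | h' | h'
            · exact (hpre k h').ge
            · subst h'; exact hms.le
            · refine hmid k h' ?_
              rw [Fin.lt_def]
              omega
          omega
      · have hti : ¬ (t : ℕ) ≤ i := by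
          have := Fin.lt_def.1 hst
          omega
        rw [if_neg hsi] at k1; rw [if_neg hti] at k2
        omega
    have hwts : wt m = wt (m - Finsupp.single s 1) + (n - (s : ℕ)) := by
      conv_lhs => rw [← hm1]
      rw [wt_add, wt_single, mul_one]
    have hwtt : wt m' = wt (m - Finsupp.single s 1) + (n - (t : ℕ)) := by
      rw [hm', wt_add, wt_single, mul_one]
    have hlt : wt m' < N := by
      have h1 := t.isLt
      have h2 := Fin.lt_def.1 hst
      omega
    have hmem' := ih (wt m') hlt m' rfl hdom'
    have := hss m' hmem' t s hst.le hm't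
    rwa [hback] at this

lemma mem_J_iff (l a : Fin n →₀ ℕ) :
    monomial a (1 : K) ∈ Ideal.span ((fun a => monomial a (1 : K)) '' {a | Dom l a}) ↔
      Dom l a := by
  rw [mem_ideal_span_monomial_image]
  classical
  have hsupp : (monomial a (1 : K)).support = {a} := by
    rw [support_monomial, if_neg (one_ne_zero (α := K))]
  rw [hsupp]
  simp only [Finset.mem_singleton, Set.mem_setOf_eq]
  constructor
  · intro h
    obtain ⟨a', ha', hle⟩ := h a rfl
    exact dom_mono hle ha'
  · intro h xi hxi
    exact ⟨a, h, le_of_eq hxi.symm⟩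

lemma mem_I_iff {l : Fin n →₀ ℕ} {I : Ideal (MvPolynomial (Fin n) K)}
    (hI : I = sInf {J : Ideal (MvPolynomial (Fin n) K) |
      IsStronglyStable J ∧ monomial l (1 : K) ∈ J}) (m : Fin n →₀ ℕ) :
    monomial m (1 : K) ∈ I ↔ Dom l m := by
  constructor
  · intro h
    set J := Ideal.span ((fun a => monomial a (1 : K)) '' {a | Dom l a}) with hJ
    have hJss : IsStronglyStable J := by
      refine ⟨⟨_, hJ⟩, fun a ha i j hji hai => ?_⟩
      have hda : Dom l a := (mem_J_iff l a).1 ha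
      refine (mem_J_iff l _).2 fun tIdx => ?_
      have hsub : Finsupp.single i 1 ≤ a := Finsupp.single_le_iff.2 (by omega)
      have h1 : a - Finsupp.single i 1 + Finsupp.single i 1 = a := tsub_add_cancel_of_le hsub
      have k1 : psum (a - Finsupp.single i 1) tIdx + psum (Finsupp.single i 1) tIdx
          = psum a tIdx := by rw [← psum_add, h1]
      have k2 := psum_add (a - Finsupp.single i 1) (Finsupp.single j 1) tIdx
      rw [psum_single] at k1 k2
      rw [k2]
      have hd := hda tIdx
      have hji' : (j : ℕ) ≤ (i : ℕ) := hji
      split_ifs at k1 ⊢ <;> omega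
    have hJl : monomial l (1 : K) ∈ J := (mem_J_iff l l).2 fun i => le_refl _
    have hIJ : I ≤ J := hI ▸ sInf_le ⟨hJss, hJl⟩
    exact (mem_J_iff l m).1 (hIJ h)
  · intro h
    rw [hI, Submodule.mem_sInf]
    rintro J' ⟨hss, hl⟩
    exact mem_of_dom l J' hss.2 hl (wt m) m rfl h

end Stmt13Aux

open Stmt13Aux

/-- let `I` be the smallest strongly stable ideal containing
`u = x_1^{l_1} ⋯ x_n^{l_n}`.  For `1 ≤ j ≤ n`,
`x_1^{c_1} ⋯ x_j^{c_j}·K[x_{j+1}, …, x_n] ∩ I = {0}` iff some partial sum satisfies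
`c_1 + ⋯ + c_i ≤ l_1 + ⋯ + l_i − 1` (for some `1 ≤ i ≤ j`). -/
theorem stmt13 {K : Type} [Field K] {n : ℕ} (l : Fin n →₀ ℕ)
    (I : Ideal (MvPolynomial (Fin n) K))
    (hI : I = sInf {J : Ideal (MvPolynomial (Fin n) K) |
      IsStronglyStable J ∧ monomial l (1 : K) ∈ J})
    (j : ℕ) (hj1 : 1 ≤ j) (hjn : j ≤ n) (c : Fin n →₀ ℕ)
    (hc : ∀ k : Fin n, j ≤ (k : ℕ) → c k = 0) :
    (∀ b : Fin n →₀ ℕ, (∀ k ∈ b.support, j ≤ (k : ℕ)) →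
        monomial (c + b) (1 : K) ∉ I) ↔
      ∃ i : ℕ, i < j ∧
        (∑ k ∈ Finset.univ.filter (fun k : Fin n => (k : ℕ) ≤ i), c k) <
          ∑ k ∈ Finset.univ.filter (fun k : Fin n => (k : ℕ) ≤ i), l k := by
  constructor
  · intro H
    by_contra hcon
    push_neg at hcon
    have hcon' : ∀ i : ℕ, i < j → psum l i ≤ psum c i := hcon
    set L := ∑ k, l k with hL
    set b : Fin n →₀ ℕ :=
      Finsupp.equivFunOnFinite.symm (fun k : Fin n => if j ≤ (k : ℕ) then L else 0) with hb
    have hbk : ∀ k : Fin n, b k = if j ≤ (k : ℕ) then L else 0 := fun k => rfl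
    have hbsupp : ∀ k ∈ b.support, j ≤ (k : ℕ) := by
      intro k hk
      have h0 := Finsupp.mem_support_iff.1 hk
      rw [hbk] at h0
      by_contra h
      rw [if_neg h] at h0
      exact h0 rfl
    refine H b hbsupp ((mem_I_iff hI _).2 ?_)
    intro i
    have hle : psum l i ≤ L := psum_le_tot l i
    have hcb : psum (c + b) i = psum c i + psum b i := psum_add _ _ _
    by_cases hij : i < j
    · have h0 := hcon' i hij
      omega
    · by_cases hjn' : j < n
      · have hk0 : (⟨j, hjn'⟩ : Fin n) ∈
            Finset.univ.filter (fun k : Fin n => (k : ℕ) ≤ i) := by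
          simp only [Finset.mem_filter, Finset.mem_univ, true_and]
          omega
        have hsb : b ⟨j, hjn'⟩ ≤ psum b i :=
          Finset.single_le_sum (fun k _ => Nat.zero_le _) hk0
        rw [hbk] at hsb
        rw [if_pos (le_refl j)] at hsb
        omega
      · have hj : j = n := le_antisymm hjn (not_lt.1 hjn')
        have e1 : psum l i = L := psum_eq_tot' (by omega)
        have e2 := hcon' (j - 1) (by omega)
        have e3 : psum c (j - 1) = ∑ k, c k := psum_eq_tot' (by omega)
        have e4 : psum l (j - 1) = L := psum_eq_tot' (by omega)
        have e5 : psum c i = ∑ k, c k := psum_eq_tot' (by omega)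
        omega
  · rintro ⟨i, hij, hlt⟩ b hb hmem
    have hdom := (mem_I_iff hI _).1 hmem
    have hd := hdom i
    have hlt' : psum c i < psum l i := hlt
    have hzb : psum b i = 0 := by
      refine Finset.sum_eq_zero fun k hk => ?_
      have hki : (k : ℕ) ≤ i := (Finset.mem_filter.1 hk).2
      by_contra h
      exact absurd (hb k (Finsupp.mem_support_iff.2 h)) (by omega)
    have hcb := psum_add c b i
    omega
end

section
/- Let I be the smallest strongly stable ideal in K[x_1,...,x_n] containing u = x_1^{l_1}···x_n^{l_n}. Then the set of all standard pairs of I equals the union over j = 1,...,n of { (x_1^{c_1}···x_j^{c_j}, {x_{j+1},...,x_n}) : c_1+···+c_i ≥ l_1+···+l_i for all i = 1,...,j−1, and c_1+···+c_j ≤ l_1+···+l_j − 1 }. -/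
open MvPolynomial

namespace Stmt14Aux

variable {n : ℕ}

/-- extension of a `Fin n →₀ ℕ` to `ℕ` by zero -/
def extF (a : Fin n →₀ ℕ) (k : ℕ) : ℕ := if h : k < n then a ⟨k, h⟩ else 0

/-- partial sum of first `m` entries -/
def S (a : Fin n →₀ ℕ) (m : ℕ) : ℕ := ∑ k ∈ Finset.range m, extF a k

lemma extF_coe (a : Fin n →₀ ℕ) (k : Fin n) : extF a (k : ℕ) = a k := by
  simp [extF, k.isLt]

lemma extF_of_le (a : Fin n →₀ ℕ) {k : ℕ} (h : n ≤ k) : extF a k = 0 := by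
  simp [extF, Nat.not_lt.mpr h]

lemma S_zero (a : Fin n →₀ ℕ) : S a 0 = 0 := by simp [S]

lemma S_succ (a : Fin n →₀ ℕ) (m : ℕ) : S a (m + 1) = S a m + extF a m :=
  Finset.sum_range_succ _ _

lemma S_mono (a : Fin n →₀ ℕ) {m m' : ℕ} (h : m ≤ m') : S a m ≤ S a m' :=
  Finset.sum_le_sum_of_subset (Finset.range_subset_range.mpr h)

lemma S_stab (a : Fin n →₀ ℕ) {m : ℕ} (h : n ≤ m) : S a m = S a n := by
  refine (Finset.sum_subset (Finset.range_subset_range.mpr h) ?_).symm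
  intro j hj hnj
  simp only [Finset.mem_range, not_lt] at hnj
  exact extF_of_le a hnj

lemma S_filter (a : Fin n →₀ ℕ) (m : ℕ) :
    ∑ k ∈ Finset.univ.filter (fun k : Fin n => (k : ℕ) < m), a k = S a m := by
  rw [Finset.sum_filter]
  have h1 : ∀ k : Fin n, (if (k : ℕ) < m then a k else 0)
      = (fun j : ℕ => if j < m then extF a j else 0) (k : ℕ) := by
    intro k; simp [extF_coe]
  rw [Finset.sum_congr rfl fun k _ => h1 k,
    Fin.sum_univ_eq_sum_range (fun j : ℕ => if j < m then extF a j else 0) n,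
    ← Finset.sum_filter]
  have h2 : (Finset.range n).filter (fun j => j < m) = Finset.range (min n m) := by
    ext j; simp [Finset.mem_filter, Finset.mem_range]
  rw [h2]
  unfold S
  refine Finset.sum_subset (Finset.range_subset_range.mpr (min_le_right n m)) ?_
  intro j hj hnj
  simp only [Finset.mem_range] at hj hnj
  exact extF_of_le a (by omega)

lemma S_add (a b : Fin n →₀ ℕ) (m : ℕ) : S (a + b) m = S a m + S b m := by
  unfold S
  rw [← Finset.sum_add_distrib]
  refine Finset.sum_congr rfl fun k _ => ?_
  unfold extF
  split <;> simp

lemma S_le_of_le {a b : Fin n →₀ ℕ} (h : ∀ k, a k ≤ b k) (m : ℕ) : S a m ≤ S b m := by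
  refine Finset.sum_le_sum fun k _ => ?_
  unfold extF; split <;> simp [h]

lemma S_single (i : Fin n) (c m : ℕ) :
    S (Finsupp.single i c) m = if (i : ℕ) < m then c else 0 := by
  unfold S
  have h1 : ∀ k, extF (Finsupp.single i c) k = if k = (i : ℕ) then c else 0 := by
    intro k
    unfold extF
    split
    · rename_i h
      rw [Finsupp.single_apply]
      simp [Fin.ext_iff, eq_comm]
    · rename_i h
      symm
      rw [if_neg]
      rintro rfl
      exact h i.isLt
  simp_rw [h1]
  rw [Finset.sum_ite_eq' (Finset.range m) (i : ℕ) (fun _ => c)]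
  simp [Finset.mem_range]

lemma S_ext {a b : Fin n →₀ ℕ} (h : ∀ m, S a m = S b m) : a = b := by
  ext k
  have h1 := h (k + 1)
  have h2 := h (k : ℕ)
  rw [S_succ, S_succ, extF_coe, extF_coe] at h1
  omega

lemma move_add {a : Fin n →₀ ℕ} {i j : Fin n} (h : a i ≠ 0) :
    (a - Finsupp.single i 1 + Finsupp.single j 1) + Finsupp.single i 1
      = a + Finsupp.single j 1 := by
  ext k
  by_cases h1 : i = k
  · subst h1
    simp only [Finsupp.add_apply, Finsupp.tsub_apply, Finsupp.single_apply, if_pos rfl]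
    have : 1 ≤ a i := Nat.one_le_iff_ne_zero.mpr h
    split_ifs <;> omega
  · simp only [Finsupp.add_apply, Finsupp.tsub_apply, Finsupp.single_apply, if_neg h1]
    split_ifs <;> omega

lemma move_inv {a : Fin n →₀ ℕ} {i j : Fin n} (h : a i ≠ 0) :
    ((a - Finsupp.single i 1 + Finsupp.single j 1) - Finsupp.single j 1)
      + Finsupp.single i 1 = a := by
  ext k
  by_cases h1 : i = k
  · subst h1
    simp only [Finsupp.add_apply, Finsupp.tsub_apply, Finsupp.single_apply, if_pos rfl]
    have : 1 ≤ a i := Nat.one_le_iff_ne_zero.mpr h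
    split_ifs <;> omega
  · simp only [Finsupp.add_apply, Finsupp.tsub_apply, Finsupp.single_apply, if_neg h1]
    split_ifs <;> omega

/-- the set of exponents of the smallest strongly stable ideal containing `x^l` -/
def MSet (l : Fin n →₀ ℕ) : Set (Fin n →₀ ℕ) := {a | ∀ m, S l m ≤ S a m}

lemma MSet_mono {l a b : Fin n →₀ ℕ} (ha : a ∈ MSet l) (hab : a ≤ b) : b ∈ MSet l :=
  fun m => le_trans (ha m) (S_le_of_le (fun k => Finsupp.le_def.mp hab k) m)

variable {K : Type} [Field K]

lemma monomial_mem_span_MSet {l a : Fin n →₀ ℕ} :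
    monomial a (1 : K) ∈ Ideal.span ((fun b => monomial b (1 : K)) '' MSet l)
      ↔ a ∈ MSet l := by
  classical
  rw [mem_ideal_span_monomial_image]
  have hs : (monomial a (1 : K)).support = {a} := by
    rw [support_monomial, if_neg one_ne_zero]
  rw [hs]
  simp only [Finset.mem_singleton]
  constructor
  · intro h
    obtain ⟨b, hb, hba⟩ := h a rfl
    exact MSet_mono hb hba
  · intro h c hc
    exact ⟨a, h, hc ▸ le_rfl⟩

lemma isStronglyStable_span (l : Fin n →₀ ℕ) :
    IsStronglyStable (Ideal.span ((fun b => monomial b (1 : K)) '' MSet l)) := by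
  refine ⟨⟨MSet l, rfl⟩, ?_⟩
  intro a ha i j hij hai
  rw [monomial_mem_span_MSet] at ha ⊢
  intro m
  have key := congrArg (fun x => S x m) (move_add (a := a) (i := i) (j := j) hai)
  simp only [S_add, S_single] at key ⊢
  have h1 := ha m
  have h2 : (j : ℕ) ≤ (i : ℕ) := hij
  split_ifs at key ⊢ <;> omega

lemma mem_of_stronglyStable_deg {l : Fin n →₀ ℕ} (J : Ideal (MvPolynomial (Fin n) K))
    (hJ : IsStronglyStable J) (hl : monomial l (1 : K) ∈ J) :
    ∀ N (b : Fin n →₀ ℕ), b ∈ MSet l → S b n = S l n →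
      (∑ m ∈ Finset.range n, (S b m - S l m)) = N → monomial b (1 : K) ∈ J := by
  intro N
  induction N using Nat.strong_induction_on with
  | _ N IH =>
  intro b hb hdeg hmu
  by_cases hall : ∀ m, S b m = S l m
  · have : b = l := S_ext hall
    rw [this]; exact hl
  · push_neg at hall
    obtain ⟨p, hp⟩ := hall
    have hpn : p < n := by
      by_contra h
      push_neg at h
      rw [S_stab b h, S_stab l h, hdeg] at hp
      exact hp rfl
    have hplt : S l p < S b p := lt_of_le_of_ne (hb p) (Ne.symm hp)
    have hp0 : p ≠ 0 := by rintro rfl; simp [S_zero] at hplt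
    have hTne : ((Finset.range p).filter (fun k => extF b k ≠ 0)).Nonempty := by
      by_contra h
      rw [Finset.not_nonempty_iff_eq_empty, Finset.filter_eq_empty_iff] at h
      have hz : S b p = 0 := Finset.sum_eq_zero (fun k hk => by
        have := h hk; simpa using this)
      omega
    set T := (Finset.range p).filter (fun k => extF b k ≠ 0) with hT
    set j := T.max' hTne with hjdef
    have hjT : j ∈ T := Finset.max'_mem _ _
    have hjp : j < p := Finset.mem_range.mp (Finset.mem_filter.mp hjT).1
    have hjb : extF b j ≠ 0 := (Finset.mem_filter.mp hjT).2
    have hmaxj : ∀ k, j < k → k < p → extF b k = 0 := by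
      intro k h1 h2
      by_contra hk
      have hkT : k ∈ T := Finset.mem_filter.mpr ⟨Finset.mem_range.mpr h2, hk⟩
      have := Finset.le_max' T k hkT
      omega
    have hSconst : ∀ q, j < q → q ≤ p → S b q = S b p := by
      intro q h1 h2
      have he : S b p = S b q + ∑ k ∈ Finset.Ico q p, extF b k := by
        unfold S
        rw [Finset.range_eq_Ico, Finset.range_eq_Ico]
        exact (Finset.sum_Ico_consecutive (extF b) (Nat.zero_le q) h2).symm
      have hz : ∑ k ∈ Finset.Ico q p, extF b k = 0 :=
        Finset.sum_eq_zero (fun k hk => by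
          rw [Finset.mem_Ico] at hk; exact hmaxj k (by omega) hk.2)
      omega
    set jF : Fin n := ⟨j, by omega⟩ with hjF
    set pF : Fin n := ⟨p, hpn⟩ with hpF
    have hbj : b jF ≠ 0 := by
      have := extF_coe b jF
      rw [show ((jF : ℕ)) = j from rfl] at this
      rw [← this]; exact hjb
    set c := b - Finsupp.single jF 1 + Finsupp.single pF 1 with hc
    have hkey : ∀ m, S c m + (if j < m then 1 else 0) = S b m + (if p < m then 1 else 0) := by
      intro m
      have h0 := congrArg (fun x => S x m) (move_add (a := b) (i := jF) (j := pF) hbj)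
      simp only [S_add, S_single] at h0
      have hgoal : S c m = S (b - Finsupp.single jF 1) m
          + (if p < m then 1 else 0) := by
        rw [hc, S_add, S_single]
      rw [hgoal]
      split_ifs at h0 ⊢ <;> omega
    have hc1 : c ∈ MSet l := by
      intro m
      have h1 := hkey m
      by_cases hm1 : m ≤ j
      · rw [if_neg (by omega), if_neg (by omega)] at h1
        have := hb m; omega
      · by_cases hm2 : p < m
        · rw [if_pos (by omega), if_pos hm2] at h1
          have := hb m; omega
        · rw [if_pos (by omega), if_neg hm2] at h1
          have h2 := hSconst m (by omega) (by omega)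
          have h3 : S l m ≤ S l p := S_mono l (by omega)
          omega
    have hc2 : S c n = S l n := by
      have h1 := hkey n
      rw [if_pos (by omega), if_pos hpn] at h1
      omega
    have hc3 : (∑ m ∈ Finset.range n, (S c m - S l m)) < N := by
      rw [← hmu]
      apply Finset.sum_lt_sum
      · intro m _
        have h1 := hkey m
        split_ifs at h1 <;> omega
      · refine ⟨p, Finset.mem_range.mpr hpn, ?_⟩
        have h1 := hkey p
        rw [if_pos hjp, if_neg (lt_irrefl p)] at h1
        omega
    have hcJ : monomial c (1 : K) ∈ J := IH _ hc3 c hc1 hc2 rfl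
    have hcp : c pF ≠ 0 := by
      simp [hc, Finsupp.add_apply, Finsupp.single_apply]
    have hmove := hJ.2 c hcJ pF jF (by exact Fin.mk_le_mk.mpr (le_of_lt hjp)) hcp
    have heq : (c - Finsupp.single pF 1) + Finsupp.single jF 1 = b := by
      rw [hc]; exact move_inv hbj
    rwa [heq] at hmove

lemma mem_of_stronglyStable {l : Fin n →₀ ℕ} (J : Ideal (MvPolynomial (Fin n) K))
    (hJ : IsStronglyStable J) (hl : monomial l (1 : K) ∈ J) {a : Fin n →₀ ℕ}
    (ha : a ∈ MSet l) : monomial a (1 : K) ∈ J := by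
  set d := S l n with hd
  set bf : Fin n → ℕ := fun k => min (S a ((k : ℕ) + 1)) d - min (S a (k : ℕ)) d with hbf
  set b := Finsupp.equivFunOnFinite.symm bf with hbdef
  have hbapp : ∀ k, b k = bf k := fun k => rfl
  have hS : ∀ m, m ≤ n → S b m = min (S a m) d := by
    intro m
    induction m with
    | zero => intro _; simp [S_zero]
    | succ m ih =>
      intro h
      have hm : m < n := h
      rw [S_succ, ih (by omega)]
      have h1 : extF b m = min (S a (m + 1)) d - min (S a m) d := by
        unfold extF
        rw [dif_pos hm]
        exact hbapp _
      have h2 := S_succ a m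
      rw [h1]
      omega
  have hdle : d ≤ S a n := ha n
  have hb1 : b ∈ MSet l := by
    intro m
    by_cases hm : m ≤ n
    · rw [hS m hm]
      exact le_min (ha m) (S_mono l hm)
    · push_neg at hm
      rw [S_stab b hm.le, S_stab l hm.le, hS n le_rfl]
      exact le_min (ha n) le_rfl
  have hb2 : S b n = d := by
    rw [hS n le_rfl]; omega
  have hble : b ≤ a := by
    rw [Finsupp.le_def]
    intro k
    have h1 := S_succ a (k : ℕ)
    rw [extF_coe] at h1
    have h2 : b k = min (S a ((k : ℕ) + 1)) d - min (S a (k : ℕ)) d := hbapp k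
    rw [h2]
    omega
  have key := mem_of_stronglyStable_deg J hJ hl _ b hb1 hb2 rfl
  have hsplit : monomial a (1 : K) = monomial (a - b) (1 : K) * monomial b (1 : K) := by
    rw [monomial_mul, one_mul, tsub_add_cancel_of_le hble]
  rw [hsplit]
  exact Ideal.mul_mem_left _ _ key

lemma mem_I_iff {l : Fin n →₀ ℕ} {I : Ideal (MvPolynomial (Fin n) K)}
    (hI : I = sInf {J : Ideal (MvPolynomial (Fin n) K) |
      IsStronglyStable J ∧ monomial l (1 : K) ∈ J}) (a : Fin n →₀ ℕ) :
    monomial a (1 : K) ∈ I ↔ a ∈ MSet l := by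
  rw [hI, Ideal.mem_sInf]
  constructor
  · intro h
    have h0 := h (show Ideal.span ((fun b => monomial b (1 : K)) '' MSet l) ∈ _ from
      ⟨isStronglyStable_span l, monomial_mem_span_MSet.mpr (fun m => le_rfl)⟩)
    exact monomial_mem_span_MSet.mp h0
  · intro h J hJ
    exact mem_of_stronglyStable J hJ.1 hJ.2 h

lemma admissible_iff {l : Fin n →₀ ℕ} {I : Ideal (MvPolynomial (Fin n) K)}
    (hmem : ∀ a : Fin n →₀ ℕ, monomial a (1 : K) ∈ I ↔ a ∈ MSet l)
    (a : Fin n →₀ ℕ) (Z : Finset (Fin n)) :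
    IsAdmissiblePair I a Z ↔ ((∀ i ∈ a.support, i ∉ Z) ∧
      ∃ m, m ≤ n ∧ (∀ k ∈ Z, m ≤ (k : ℕ)) ∧ S a m < S l m) := by
  classical
  constructor
  · rintro ⟨h1, h2⟩
    refine ⟨h1, ?_⟩
    set d := S l n with hd
    set b := Finsupp.equivFunOnFinite.symm
      (fun k : Fin n => if k ∈ Z then d else 0) with hb
    have hbapp : ∀ k, b k = if k ∈ Z then d else 0 := fun k => rfl
    have hbsupp : ∀ i ∈ b.support, i ∈ Z := by
      intro i hi
      rw [Finsupp.mem_support_iff, hbapp] at hi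
      by_contra h
      rw [if_neg h] at hi
      exact hi rfl
    have h3 := h2 b hbsupp
    rw [hmem] at h3
    simp only [MSet, Set.mem_setOf_eq, not_forall, not_le] at h3
    obtain ⟨m, hm⟩ := h3
    refine ⟨min m n, min_le_right _ _, ?_, ?_⟩
    · intro k hk
      by_contra hlt
      push_neg at hlt
      have hterm : extF b (k : ℕ) = d := by rw [extF_coe, hbapp, if_pos hk]
      have hle : d ≤ S b m := by
        rw [← hterm]
        exact Finset.single_le_sum (f := extF b) (fun i _ => Nat.zero_le _)
          (Finset.mem_range.mpr (by omega))
      have h4 := S_add a b m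
      have h5 : S l m ≤ d := by
        by_cases hmn : m ≤ n
        · exact S_mono l hmn
        · rw [S_stab l (by omega)]
      omega
    · have h4 := S_add a b m
      by_cases hmn : m ≤ n
      · rw [min_eq_left hmn]
        omega
      · rw [min_eq_right (by omega)]
        rw [S_stab (a + b) (by omega), S_stab l (by omega)] at hm
        have h6 := S_add a b n
        omega
  · rintro ⟨h1, m, hmn, hZ, hlt⟩
    refine ⟨h1, ?_⟩
    intro b hbs
    rw [hmem]
    intro hM
    have h2 := hM m
    have h3 : S b m = 0 := by
      apply Finset.sum_eq_zero
      intro k hk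
      rw [Finset.mem_range] at hk
      by_cases hkn : k < n
      · unfold extF
        rw [dif_pos hkn]
        by_contra h
        have hmem2 : (⟨k, hkn⟩ : Fin n) ∈ Z := hbs _ (Finsupp.mem_support_iff.mpr h)
        have := hZ _ hmem2
        simp only [Fin.val_mk] at this
        omega
      · exact extF_of_le b (by omega)
    have h4 := S_add a b m
    omega

lemma coneLE_facts {a a' : Fin n →₀ ℕ} {Z Z' : Finset (Fin n)}
    (h : ConeLE a Z a' Z') :
    (∀ k, a' k ≤ a k) ∧ (∀ k : Fin n, a k ≠ a' k → k ∈ Z') ∧ (∀ k ∈ Z, k ∈ Z') := by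
  obtain ⟨b0, hb0, heq0⟩ := h 0 (by simp)
  rw [add_zero] at heq0
  have happ : ∀ k, a k = a' k + b0 k := by
    intro k
    rw [heq0, Finsupp.add_apply]
  have hle : ∀ k, a' k ≤ a k := by intro k; rw [happ k]; omega
  refine ⟨hle, ?_, ?_⟩
  · intro k hk
    have h1 := happ k
    have hb0k : b0 k ≠ 0 := by omega
    exact hb0 k (Finsupp.mem_support_iff.mpr hb0k)
  · intro k hk
    obtain ⟨b', hb', heq⟩ := h (Finsupp.single k 1) (by
      intro i hi
      have := Finsupp.support_single_subset hi
      simp only [Finset.mem_singleton] at this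
      exact this ▸ hk)
    have h1 : a k + 1 = a' k + b' k := by
      have h2 := congrArg (fun f : Fin n →₀ ℕ => f k) heq
      simpa [Finsupp.add_apply, Finsupp.single_apply] using h2
    have hb'k : b' k ≠ 0 := by have := hle k; omega
    exact hb' k (Finsupp.mem_support_iff.mpr hb'k)

end Stmt14Aux



/-- let `I` be the smallest strongly stable ideal containing
`u = x_1^{l_1} ⋯ x_n^{l_n}`.  The set of standard pairs of `I` is the union over
`j = 1, …, n` of the pairs `(x_1^{c_1} ⋯ x_j^{c_j}, {x_{j+1}, …, x_n})` with
`c_1 + ⋯ + c_i ≥ l_1 + ⋯ + l_i` for all `i = 1, …, j−1` and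
`c_1 + ⋯ + c_j ≤ l_1 + ⋯ + l_j − 1`. -/
theorem stmt14 {K : Type} [Field K] {n : ℕ} (l : Fin n →₀ ℕ)
    (I : Ideal (MvPolynomial (Fin n) K))
    (hI : I = sInf {J : Ideal (MvPolynomial (Fin n) K) |
      IsStronglyStable J ∧ monomial l (1 : K) ∈ J}) :
    {p : (Fin n →₀ ℕ) × Finset (Fin n) | IsStandardPair I p.1 p.2} =
      {p : (Fin n →₀ ℕ) × Finset (Fin n) | ∃ j : ℕ, 1 ≤ j ∧ j ≤ n ∧
        p.2 = Finset.univ.filter (fun k : Fin n => j ≤ (k : ℕ)) ∧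
        (∀ k : Fin n, j ≤ (k : ℕ) → p.1 k = 0) ∧
        (∀ i : ℕ, i < j →
          (∑ k ∈ Finset.univ.filter (fun k : Fin n => (k : ℕ) < i), l k) ≤
            ∑ k ∈ Finset.univ.filter (fun k : Fin n => (k : ℕ) < i), p.1 k) ∧
        (∑ k ∈ Finset.univ.filter (fun k : Fin n => (k : ℕ) < j), p.1 k) <
          ∑ k ∈ Finset.univ.filter (fun k : Fin n => (k : ℕ) < j), l k} := by
  classical
  have hmem := Stmt14Aux.mem_I_iff (K := K) hI
  ext p
  obtain ⟨a, Z⟩ := p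
  simp only [Set.mem_setOf_eq]
  constructor
  · rintro ⟨hadm, hmax⟩
    obtain ⟨h1, m0, hm0n, hZ0, hlt0⟩ := (Stmt14Aux.admissible_iff hmem a Z).mp hadm
    have hex : ∃ m, Stmt14Aux.S a m < Stmt14Aux.S l m := ⟨m0, hlt0⟩
    set j := Nat.find hex with hjdef
    have hj : Stmt14Aux.S a j < Stmt14Aux.S l j := Nat.find_spec hex
    have hjle : j ≤ m0 := Nat.find_min' hex hlt0
    have hmin : ∀ i, i < j → Stmt14Aux.S l i ≤ Stmt14Aux.S a i := by
      intro i hi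
      have := Nat.find_min hex hi
      omega
    have hj1 : 1 ≤ j := by
      rcases Nat.eq_zero_or_pos j with h | h
      · rw [h] at hj
        simp [Stmt14Aux.S_zero] at hj
      · exact h
    have hjn : j ≤ n := le_trans hjle hm0n
    set c := Finsupp.equivFunOnFinite.symm
      (fun k : Fin n => if (k : ℕ) < j then a k else 0) with hcdef
    have hcapp : ∀ k, c k = if (k : ℕ) < j then a k else 0 := fun k => rfl
    set Zc := Finset.univ.filter (fun k : Fin n => j ≤ (k : ℕ)) with hZc
    have hSc : ∀ i, i ≤ j → Stmt14Aux.S c i = Stmt14Aux.S a i := by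
      intro i hi
      unfold Stmt14Aux.S
      apply Finset.sum_congr rfl
      intro k hk
      rw [Finset.mem_range] at hk
      by_cases hkn : k < n
      · unfold Stmt14Aux.extF
        rw [dif_pos hkn, dif_pos hkn, hcapp,
          if_pos (show ((⟨k, hkn⟩ : Fin n) : ℕ) < j by simp only [Fin.val_mk]; omega)]
      · rw [Stmt14Aux.extF_of_le _ (by omega), Stmt14Aux.extF_of_le _ (by omega)]
    have hcle : c ≤ a := by
      rw [Finsupp.le_def]
      intro k
      rw [hcapp]
      split_ifs <;> simp
    have hadmc : IsAdmissiblePair I c Zc := by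
      rw [Stmt14Aux.admissible_iff hmem]
      refine ⟨?_, j, hjn, ?_, ?_⟩
      · intro i hi
        rw [Finsupp.mem_support_iff, hcapp] at hi
        rw [hZc, Finset.mem_filter]
        rintro ⟨-, hji⟩
        rw [if_neg (by omega)] at hi
        exact hi rfl
      · intro k hk
        rw [hZc, Finset.mem_filter] at hk
        exact hk.2
      · rw [hSc j le_rfl]
        exact hj
    have hcone : ConeLE a Z c Zc := by
      intro b hbs
      refine ⟨(a - c) + b, ?_, ?_⟩
      · intro i hi
        rw [Finsupp.mem_support_iff, Finsupp.add_apply, Finsupp.tsub_apply] at hi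
        rw [hZc, Finset.mem_filter]
        refine ⟨Finset.mem_univ _, ?_⟩
        by_contra hij
        push_neg at hij
        have h2 : c i = a i := by rw [hcapp, if_pos hij]
        have h3 : b i = 0 := by
          by_contra h4
          have := hZ0 _ (hbs i (Finsupp.mem_support_iff.mpr h4))
          omega
        omega
      · have hca : c + (a - c) = a := by
          rw [add_comm]
          exact tsub_add_cancel_of_le hcle
        rw [← add_assoc, hca]
    by_cases heqp : ((a, Z) : (Fin n →₀ ℕ) × Finset (Fin n)) = (c, Zc)
    · have ha_eq : a = c := congrArg Prod.fst heqp
      have hZ_eq : Z = Zc := congrArg Prod.snd heqp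
      refine ⟨j, hj1, hjn, ?_, ?_, ?_, ?_⟩
      · exact hZ_eq.trans hZc
      · intro k hk
        rw [ha_eq, hcapp, if_neg (by omega)]
      · intro i hi
        rw [Stmt14Aux.S_filter, Stmt14Aux.S_filter]
        exact hmin i hi
      · rw [Stmt14Aux.S_filter, Stmt14Aux.S_filter]
        exact hj
    · exact absurd hcone (hmax c Zc hadmc heqp)
  · rintro ⟨j, hj1, hjn, hZeq, ha0, hge, hlt⟩
    simp only [Stmt14Aux.S_filter] at hge hlt
    constructor
    · rw [Stmt14Aux.admissible_iff hmem]
      refine ⟨?_, j, hjn, ?_, hlt⟩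
      · intro i hi
        rw [Finsupp.mem_support_iff] at hi
        rw [hZeq, Finset.mem_filter]
        rintro ⟨-, hji⟩
        exact hi (ha0 i hji)
      · intro k hk
        rw [hZeq, Finset.mem_filter] at hk
        exact hk.2
    · intro a' Z' hadm' hne hcone
      obtain ⟨hle, hsupp, hZZ'⟩ := Stmt14Aux.coneLE_facts hcone
      obtain ⟨h1', m, hmn, hZ'm, hlt'⟩ := (Stmt14Aux.admissible_iff hmem a' Z').mp hadm'
      have hmj : m ≤ j := by
        by_contra hmj
        push_neg at hmj
        have hjn' : j < n := by omega
        have hjZ : (⟨j, hjn'⟩ : Fin n) ∈ Z := by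
          rw [hZeq, Finset.mem_filter]
          exact ⟨Finset.mem_univ _, le_rfl⟩
        have := hZ'm _ (hZZ' _ hjZ)
        simp only [Fin.val_mk] at this
        omega
      have hagree : ∀ k : Fin n, (k : ℕ) < m → a' k = a k := by
        intro k hk
        by_contra hne2
        have hkZ' : k ∈ Z' := hsupp k (fun h => hne2 h.symm)
        have := hZ'm _ hkZ'
        omega
      have hSm : Stmt14Aux.S a' m = Stmt14Aux.S a m := by
        unfold Stmt14Aux.S
        apply Finset.sum_congr rfl
        intro k hk
        rw [Finset.mem_range] at hk
        by_cases hkn : k < n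
        · unfold Stmt14Aux.extF
          rw [dif_pos hkn, dif_pos hkn]
          exact hagree ⟨k, hkn⟩ hk
        · rw [Stmt14Aux.extF_of_le _ (by omega), Stmt14Aux.extF_of_le _ (by omega)]
      have hmeqj : m = j := by
        by_contra hm2
        have hmlt : m < j := by omega
        have := hge m hmlt
        omega
      subst hmeqj
      have hZ'Z : ∀ k, k ∈ Z' → k ∈ Z := by
        intro k hk
        rw [hZeq, Finset.mem_filter]
        exact ⟨Finset.mem_univ _, hZ'm _ hk⟩
      have hZeq2 : Z = Z' := Finset.ext (fun k => ⟨hZZ' k, hZ'Z k⟩)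
      have haeq : a = a' := by
        ext k
        by_cases hk : (k : ℕ) < m
        · exact (hagree k hk).symm
        · have h3 := ha0 k (by omega)
          have h4 := hle k
          omega
      exact hne (by rw [haeq, hZeq2])
end
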